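/- (Martingale difference property of the scores with respect to the reversed-time filtration.) Let {u_t}_{t∈ℤ} be a strictly stationary ℝ^n-valued process with E‖u_t‖² < ∞ satisfying E(u_t ∣ {u_s}_{s≠t}) = 0 almost surely. Then for every n × np coefficient matrix A, every horizon h ∈ ℕ, every i ∈ {1,…,n}, every w ∈ ℝ^n, and every t ∈ ℤ, E[ ξ_{i,t}(A,h) (w'u_t) ∣ σ(u_{t+1}, u_{t+2}, …) ] = 0 almost surely; consequently, the reversed-time array χ_{T,t} = ξ_{i,T−h+1−t}(A,h)(w'u_{T−h+1−t}) is a martingale difference array with respect to the filtration 𝔉_{T,t} = σ(u_{T−h+1−t}, u_{T−h+2−t}, …). -/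

import Mathlib

open MeasureTheory Filter Finset Matrix Topology

noncomputable section

namespace LP

variable {Ω : Type} [MeasurableSpace Ω]

/-- The σ-algebra generated by the random variables `u s`, `s ∈ S`. -/
def sigmaGen {E : Type*} [MeasurableSpace E] (u : ℤ → Ω → E) (S : Set ℤ) :
    MeasurableSpace Ω :=
  ⨆ s ∈ S, MeasurableSpace.comap (u s) inferInstance

/-- Strict stationarity of a process indexed by `ℤ`. -/
def StrictlyStationary {E : Type*} [MeasurableSpace E] (μ : Measure Ω) (u : ℤ → Ω → E) :
    Prop :=
  ∀ (m : ℕ) (t : ℤ),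
    Measure.map (fun ω (j : Fin m) => u (t + (j : ℕ)) ω) μ
      = Measure.map (fun ω (j : Fin m) => u ((j : ℕ) : ℤ) ω) μ

/-- Joint cumulant of order 2 (covariance). -/
def cum2 (μ : Measure Ω) (f g : Ω → ℝ) : ℝ :=
  (∫ ω, f ω * g ω ∂μ) - (∫ ω, f ω ∂μ) * (∫ ω, g ω ∂μ)

/-- Joint cumulant of order 3. -/
def cum3 (μ : Measure Ω) (f g h : Ω → ℝ) : ℝ :=
  (∫ ω, f ω * g ω * h ω ∂μ)
    - (∫ ω, f ω * g ω ∂μ) * (∫ ω, h ω ∂μ)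
    - (∫ ω, f ω * h ω ∂μ) * (∫ ω, g ω ∂μ)
    - (∫ ω, g ω * h ω ∂μ) * (∫ ω, f ω ∂μ)
    + 2 * (∫ ω, f ω ∂μ) * (∫ ω, g ω ∂μ) * (∫ ω, h ω ∂μ)

/-- Joint cumulant of order 4. -/
def cum4 (μ : Measure Ω) (f g h k : Ω → ℝ) : ℝ :=
  (∫ ω, f ω * g ω * h ω * k ω ∂μ)
    - (∫ ω, f ω * g ω ∂μ) * (∫ ω, h ω * k ω ∂μ)
    - (∫ ω, f ω * h ω ∂μ) * (∫ ω, g ω * k ω ∂μ)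
    - (∫ ω, f ω * k ω ∂μ) * (∫ ω, g ω * h ω ∂μ)
    - (∫ ω, f ω * g ω * h ω ∂μ) * (∫ ω, k ω ∂μ)
    - (∫ ω, f ω * g ω * k ω ∂μ) * (∫ ω, h ω ∂μ)
    - (∫ ω, f ω * h ω * k ω ∂μ) * (∫ ω, g ω ∂μ)
    - (∫ ω, g ω * h ω * k ω ∂μ) * (∫ ω, f ω ∂μ)
    + 2 * ((∫ ω, f ω * g ω ∂μ) * (∫ ω, h ω ∂μ) * (∫ ω, k ω ∂μ)
      + (∫ ω, f ω * h ω ∂μ) * (∫ ω, g ω ∂μ) * (∫ ω, k ω ∂μ)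
      + (∫ ω, f ω * k ω ∂μ) * (∫ ω, g ω ∂μ) * (∫ ω, h ω ∂μ)
      + (∫ ω, g ω * h ω ∂μ) * (∫ ω, f ω ∂μ) * (∫ ω, k ω ∂μ)
      + (∫ ω, g ω * k ω ∂μ) * (∫ ω, f ω ∂μ) * (∫ ω, h ω ∂μ)
      + (∫ ω, h ω * k ω ∂μ) * (∫ ω, f ω ∂μ) * (∫ ω, g ω ∂μ))
    - 6 * (∫ ω, f ω ∂μ) * (∫ ω, g ω ∂μ) * (∫ ω, h ω ∂μ) * (∫ ω, k ω ∂μ)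

/-- Smallest eigenvalue of a symmetric matrix, via the Rayleigh quotient. -/
def lammin {ι : Type*} [Fintype ι] (M : Matrix ι ι ℝ) : ℝ :=
  sInf {r : ℝ | ∃ x : ι → ℝ, (∑ i, (x i) ^ 2) = 1 ∧ r = x ⬝ᵥ M.mulVec x}

/-- Frobenius norm of a matrix. -/
def frobNorm {ι κ : Type*} [Fintype ι] [Fintype κ] (M : Matrix ι κ ℝ) : ℝ :=
  Real.sqrt (∑ i, ∑ j, (M i j) ^ 2)

/-- Euclidean norm of a vector. -/
def euclNorm {ι : Type*} [Fintype ι] (v : ι → ℝ) : ℝ :=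
  Real.sqrt (∑ i, (v i) ^ 2)

variable {n p : ℕ}

/-- The process `u_t ⊗ u_t`. -/
def zsq (u : ℤ → Ω → (Fin n → ℝ)) (t : ℤ) (ω : Ω) : Fin n × Fin n → ℝ :=
  fun q => u t ω q.1 * u t ω q.2

/-- Absolutely summable joint cumulants up to order 4 of the process `u_t ⊗ u_t`. -/
def AbsSummableCumulants4 (μ : Measure Ω) (u : ℤ → Ω → (Fin n → ℝ)) : Prop :=
  (∀ a b : Fin n × Fin n,
    Summable fun t : ℤ => |cum2 μ (fun ω => zsq u 0 ω a) (fun ω => zsq u t ω b)|) ∧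
  (∀ a b c : Fin n × Fin n,
    Summable fun t : ℤ × ℤ =>
      |cum3 μ (fun ω => zsq u 0 ω a) (fun ω => zsq u t.1 ω b) (fun ω => zsq u t.2 ω c)|) ∧
  (∀ a b c d : Fin n × Fin n,
    Summable fun t : ℤ × ℤ × ℤ =>
      |cum4 μ (fun ω => zsq u 0 ω a) (fun ω => zsq u t.1 ω b)
        (fun ω => zsq u t.2.1 ω c) (fun ω => zsq u t.2.2 ω d)|)

/-- Assumption 1: conditional mean independence of the innovations with respect to
past and future innovations. -/
def Assumption1 (μ : Measure Ω) (u : ℤ → Ω → (Fin n → ℝ)) : Prop :=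
  ∀ t : ℤ, μ[u t | sigmaGen u {s : ℤ | s ≠ t}] =ᵐ[μ] 0

/-- Conditional second moment matrix `E[u_t u_t' ∣ {u_s}_{s<t}]` (entrywise). -/
def condSecondMoment (μ : Measure Ω) (u : ℤ → Ω → (Fin n → ℝ)) (t : ℤ) (ω : Ω) :
    Matrix (Fin n) (Fin n) ℝ :=
  Matrix.of fun a b => (μ[fun ω' => u t ω' a * u t ω' b | sigmaGen u {s : ℤ | s < t}]) ω

/-- Assumption 2 (with explicit constant `δ`). -/
def Assumption2 (μ : Measure Ω) (u : ℤ → Ω → (Fin n → ℝ)) (δ : ℝ) : Prop :=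
  0 < δ ∧
  (∀ t : ℤ, Integrable (fun ω => (∑ a, (u t ω a) ^ 2) ^ 4) μ) ∧
  (∀ t : ℤ, ∀ᵐ ω ∂μ, δ ≤ lammin (condSecondMoment μ u t ω)) ∧
  AbsSummableCumulants4 μ u

/-- The data `y` is generated by the VAR(p) model with coefficients `A`,
innovations `u`, and zero initial conditions. -/
def IsVARProcess (u : ℤ → Ω → (Fin n → ℝ)) (A : Fin p → Matrix (Fin n) (Fin n) ℝ)
    (y : ℤ → Ω → (Fin n → ℝ)) : Prop :=
  (∀ t : ℤ, t ≤ 0 → y t = 0) ∧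
  (∀ t : ℤ, 1 ≤ t → ∀ ω,
    y t ω = (∑ ℓ : Fin p, (A ℓ).mulVec (y (t - ((ℓ : ℕ) + 1)) ω)) + u t ω)

/-- Companion matrix of a collection of `m` square matrices of size `n`. -/
def companion {m : ℕ} (M : Fin m → Matrix (Fin n) (Fin n) ℝ) :
    Matrix (Fin m × Fin n) (Fin m × Fin n) ℝ :=
  Matrix.of fun q r =>
    if (q.1 : ℕ) = 0 then M r.1 q.2 r.2
    else if (q.1 : ℕ) = (r.1 : ℕ) + 1 then (if q.2 = r.2 then 1 else 0) else 0

/-- Horizon-`h` impulse responses of variable `i`: `β_i(A,h)' = e_i' J 𝐀^h J'`. -/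
def irf (hp : 0 < p) (A : Fin p → Matrix (Fin n) (Fin n) ℝ) (h : ℕ) (i : Fin n) :
    Fin n → ℝ :=
  fun b => ((companion A) ^ h) (⟨0, hp⟩, i) (⟨0, hp⟩, b)

/-- Multi-step forecast error `ξ_{i,t}(A,h) = Σ_{ℓ=1}^h β_i(A,h−ℓ)' u_{t+ℓ}`. -/
def xi (hp : 0 < p) (A : Fin p → Matrix (Fin n) (Fin n) ℝ) (h : ℕ) (i : Fin n)
    (u : ℤ → Ω → (Fin n → ℝ)) (t : ℤ) (ω : Ω) : ℝ :=
  ∑ ℓ ∈ Finset.range h, irf hp A (h - 1 - ℓ) i ⬝ᵥ u (t + (ℓ : ℤ) + 1) ω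

/-- `v_i(A,h,w) = (E[ξ_{i,t}(A,h)² (w'u_t)²])^{1/2}`. -/
def vfun (μ : Measure Ω) (hp : 0 < p) (A : Fin p → Matrix (Fin n) (Fin n) ℝ) (h : ℕ)
    (i : Fin n) (u : ℤ → Ω → (Fin n → ℝ)) (w : Fin n → ℝ) : ℝ :=
  Real.sqrt (∫ ω, (xi hp A h i u 0 ω) ^ 2 * (w ⬝ᵥ u 0 ω) ^ 2 ∂μ)

/-- `g(ρ,h)² = min{1/(1−|ρ|), h}` (equal to `h` when `|ρ| = 1`). -/
def gsq (ρ : ℝ) (h : ℕ) : ℝ := if |ρ| < 1 then min (1 / (1 - |ρ|)) (h : ℝ) else (h : ℝ)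

def gfun (ρ : ℝ) (h : ℕ) : ℝ := Real.sqrt (gsq ρ h)

/-- `ρ* = max{|ρ|, 1 − ε/2}`. -/
def rhoStar (r ε : ℝ) : ℝ := max |r| (1 - ε / 2)

/-- The diagonal scaling matrix `G(A,h,ε)` (expressed via a root vector `ρ`). -/
def Gmat (p : ℕ) {n : ℕ} (ρ : Fin n → ℝ) (h : ℕ) (ε : ℝ) :
    Matrix (Fin p × Fin n) (Fin p × Fin n) ℝ :=
  Matrix.diagonal fun q => gfun (rhoStar (ρ q.2) ε) h

/-- Factorization `A(L) = B(L)(I − diag(ρ)L)` with geometrically decaying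
companion powers for `B`; `Cc` are the coefficients of `B(L) = Σ_ℓ Cc_ℓ L^ℓ`. -/
def IsFactorization (a Cb ε : ℝ) (A : Fin p → Matrix (Fin n) (Fin n) ℝ)
    (ρ : Fin n → ℝ) (Cc : ℕ → Matrix (Fin n) (Fin n) ℝ) : Prop :=
  (∀ i, a - 1 ≤ ρ i ∧ ρ i ≤ 1 - a) ∧
  Cc 0 = 1 ∧
  (∀ ℓ : ℕ, p ≤ ℓ → Cc ℓ = 0) ∧
  (∀ k : Fin p, A k = Cc (k : ℕ) * Matrix.diagonal ρ - Cc ((k : ℕ) + 1)) ∧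
  (∀ ℓ : ℕ, 1 ≤ ℓ →
    frobNorm ((companion (fun j : Fin (p - 1) => -Cc ((j : ℕ) + 1))) ^ ℓ) ≤ Cb * (1 - ε) ^ ℓ)

/-- The parameter space `𝒜(a,C,ε)`. -/
def paramSpace (n p : ℕ) (a Cb ε : ℝ) : Set (Fin p → Matrix (Fin n) (Fin n) ℝ) :=
  {A | ∃ ρ Cc, IsFactorization a Cb ε A ρ Cc}

/-- `X_t = (y_{t−1}', …, y_{t−p}')'`. -/
def Xt (p : ℕ) (y : ℤ → Ω → (Fin n → ℝ)) (t : ℤ) (ω : Ω) : Fin p × Fin n → ℝ :=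
  fun q => y (t - ((q.1 : ℕ) + 1 : ℤ)) ω q.2

/-- Sum over the estimation sample `t = 1, …, T − h`. -/
def sumT {α : Type*} [AddCommMonoid α] (T h : ℕ) (f : ℤ → α) : α :=
  ∑ s ∈ Finset.range (T - h), f ((s : ℤ) + 1)

/-- The regressor vector `x_t = (y_t', X_t')'`. -/
def xvec (p : ℕ) (y : ℤ → Ω → (Fin n → ℝ)) (t : ℤ) (ω : Ω) :
    (Fin n ⊕ (Fin p × Fin n)) → ℝ :=
  Sum.elim (y t ω) (Xt p y t ω)

def xxMatrix (p : ℕ) (y : ℤ → Ω → (Fin n → ℝ)) (T h : ℕ) (ω : Ω) :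
    Matrix (Fin n ⊕ (Fin p × Fin n)) (Fin n ⊕ (Fin p × Fin n)) ℝ :=
  Matrix.of fun i j => sumT T h fun t => xvec p y t ω i * xvec p y t ω j

/-- Lag-augmented LP regression coefficients `(β̂_1(h)', γ̂_1(h)')'`. -/
def lpCoef (p : ℕ) (hn : 0 < n) (y : ℤ → Ω → (Fin n → ℝ)) (T h : ℕ) (ω : Ω) :
    (Fin n ⊕ (Fin p × Fin n)) → ℝ :=
  (xxMatrix p y T h ω)⁻¹.mulVec fun i =>
    sumT T h fun t => xvec p y t ω i * y (t + (h : ℤ)) ω ⟨0, hn⟩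

/-- The lag-augmented LP impulse response estimator `β̂_1(h)`. -/
def betaHat (p : ℕ) (hn : 0 < n) (y : ℤ → Ω → (Fin n → ℝ)) (T h : ℕ) (ω : Ω) :
    Fin n → ℝ :=
  fun a => lpCoef p hn y T h ω (Sum.inl a)

/-- The nuisance coefficient estimator `γ̂_1(h)`. -/
def gammaHat (p : ℕ) (hn : 0 < n) (y : ℤ → Ω → (Fin n → ℝ)) (T h : ℕ) (ω : Ω) :
    Fin p × Fin n → ℝ :=
  fun q => lpCoef p hn y T h ω (Sum.inr q)

def XXhmat (p : ℕ) (y : ℤ → Ω → (Fin n → ℝ)) (T h : ℕ) (ω : Ω) :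
    Matrix (Fin p × Fin n) (Fin p × Fin n) ℝ :=
  Matrix.of fun q r => sumT T h fun t => Xt p y t ω q * Xt p y t ω r

/-- The VAR OLS estimator `Â(h)`. -/
def Ahat (p : ℕ) (y : ℤ → Ω → (Fin n → ℝ)) (T h : ℕ) (ω : Ω) :
    Matrix (Fin n) (Fin p × Fin n) ℝ :=
  (Matrix.of fun a q => sumT T h fun t => y t ω a * Xt p y t ω q) * (XXhmat p y T h ω)⁻¹

/-- VAR residuals `û_t(h) = y_t − Â(h)X_t`. -/
def uhat (p : ℕ) (y : ℤ → Ω → (Fin n → ℝ)) (T h : ℕ) (t : ℤ) (ω : Ω) : Fin n → ℝ :=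
  fun a => y t ω a - (Ahat p y T h ω).mulVec (Xt p y t ω) a

/-- LP residuals `ξ̂_{1,t}(h)`. -/
def xihat (p : ℕ) (hn : 0 < n) (y : ℤ → Ω → (Fin n → ℝ)) (T h : ℕ) (t : ℤ) (ω : Ω) : ℝ :=
  y (t + (h : ℤ)) ω ⟨0, hn⟩ - betaHat p hn y T h ω ⬝ᵥ y t ω
    - gammaHat p hn y T h ω ⬝ᵥ Xt p y t ω

def SigmaHat (p : ℕ) (y : ℤ → Ω → (Fin n → ℝ)) (T h : ℕ) (ω : Ω) :
    Matrix (Fin n) (Fin n) ℝ :=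
  (((T - h : ℕ) : ℝ))⁻¹ •
    Matrix.of fun a b => sumT T h fun t => uhat p y T h t ω a * uhat p y T h t ω b

def scoreMat (p : ℕ) (hn : 0 < n) (y : ℤ → Ω → (Fin n → ℝ)) (T h : ℕ) (ω : Ω) :
    Matrix (Fin n) (Fin n) ℝ :=
  Matrix.of fun a b => sumT T h fun t =>
    (xihat p hn y T h t ω) ^ 2 * uhat p y T h t ω a * uhat p y T h t ω b

/-- Eicker–Huber–White standard error `ŝ_1(h,ν)`. -/
def sHat (p : ℕ) (hn : 0 < n) (ν : Fin n → ℝ) (y : ℤ → Ω → (Fin n → ℝ)) (T h : ℕ)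
    (ω : Ω) : ℝ :=
  (((T - h : ℕ) : ℝ))⁻¹ *
    Real.sqrt (ν ⬝ᵥ (SigmaHat p y T h ω)⁻¹.mulVec
      ((scoreMat p hn y T h ω).mulVec ((SigmaHat p y T h ω)⁻¹.mulVec ν)))

/-- `Σ = E[u_t u_t']`. -/
def SigmaMat (μ : Measure Ω) (u : ℤ → Ω → (Fin n → ℝ)) : Matrix (Fin n) (Fin n) ℝ :=
  Matrix.of fun a b => ∫ ω, u 0 ω a * u 0 ω b ∂μ

/-- Sample matrix `T^{−1} Σ_{t=1}^T X_t X_t'` scaled by `G⁻¹` on both sides. -/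
def scaledXX (p : ℕ) (y : ℤ → Ω → (Fin n → ℝ)) (ρ : Fin n → ℝ) (ε : ℝ) (T : ℕ) (ω : Ω) :
    Matrix (Fin p × Fin n) (Fin p × Fin n) ℝ :=
  (Gmat p ρ T ε)⁻¹ * ((T : ℝ)⁻¹ • Matrix.of fun q r =>
      sumT T 0 fun t => Xt p y t ω q * Xt p y t ω r) * (Gmat p ρ T ε)⁻¹

/-- Standard normal CDF. -/
def stdNormalCDF (x : ℝ) : ℝ :=
  ∫ t in Set.Iic x, (Real.sqrt (2 * Real.pi))⁻¹ * Real.exp (-(t ^ 2) / 2)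

/-- Standard normal quantile. -/
def normalQuantile (q : ℝ) : ℝ := sInf {x : ℝ | q ≤ stdNormalCDF x}

/-- Convergence in probability to a constant. -/
def TendstoInProb (μ : Measure Ω) (X : ℕ → Ω → ℝ) (c : ℝ) : Prop :=
  ∀ η : ℝ, 0 < η →
    Tendsto (fun T => (μ {ω | η ≤ |X T ω - c|}).toReal) atTop (𝓝 0)

end LP

/-!
`ξ_{i,t}(A,h)` is a linear combination of `u_{t+1}, …, u_{t+h}`, so it is measurable for the
future σ-algebra `𝔉_t = σ(u_{t+1}, u_{t+2}, …)` and can be pulled out of `E[· ∣ 𝔉_t]`. As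
`𝔉_t ⊆ σ(u_s : s ≠ t)`, the tower property and Assumption 1 give `E[w'u_t ∣ 𝔉_t] = 0`; finite
second moments make the product integrable. The reversed-time array is the same identity at
time `T − h + 1 − t`.
-/

section

variable {Ω : Type*} {m m₀ : MeasurableSpace Ω} {μ : Measure Ω}

lemma memLp_two_of_integrable_sum_sq {ι : Type*} [Fintype ι] {X : Ω → ι → ℝ}
    (hX : AEStronglyMeasurable X μ) (hX2 : Integrable (fun ω => ∑ a, X ω a ^ 2) μ) :
    MemLp X 2 μ := by
  refine MemLp.of_eval fun a => ?_
  have hXa : AEStronglyMeasurable (fun ω => X ω a) μ :=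
    (continuous_apply a).comp_aestronglyMeasurable hX
  refine (memLp_two_iff_integrable_sq hXa).2 (hX2.mono' (hXa.pow 2) (ae_of_all _ fun ω => ?_))
  rw [Real.norm_eq_abs, abs_sq]
  exact Finset.single_le_sum (f := fun b => X ω b ^ 2) (fun b _ => sq_nonneg _) (mem_univ a)

lemma condExp_mul_eq_zero_of_condExp_eq_zero {f g : Ω → ℝ}
    (hf : StronglyMeasurable[m] f) (hfg : Integrable (f * g) μ) (hg : Integrable g μ)
    (hg0 : μ[g | m] =ᵐ[μ] 0) : μ[f * g | m] =ᵐ[μ] 0 := by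
  filter_upwards [condExp_mul_of_stronglyMeasurable_left hf hfg hg, hg0] with ω hω hω0
  simp [hω, hω0]

lemma condExp_comp_eq_zero_of_le {E F : Type*} [NormedAddCommGroup E] [NormedSpace ℝ E]
    [CompleteSpace E] [NormedAddCommGroup F] [NormedSpace ℝ F] [CompleteSpace F]
    {m' : MeasurableSpace Ω} (hm : m ≤ m') (hm' : m' ≤ m₀)
    [SigmaFinite (μ.trim hm')] {X : Ω → E} (hX : Integrable X μ) (hX0 : μ[X | m'] =ᵐ[μ] 0)
    (L : E →L[ℝ] F) : μ[L ∘ X | m] =ᵐ[μ] 0 := by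
  have hLX0 : μ[L ∘ X | m'] =ᵐ[μ] 0 := by
    filter_upwards [(L.comp_condExp_comm (m := m') hX).symm, hX0] with ω hω hω0
    rw [hω, Function.comp_apply, hω0, Pi.zero_apply, map_zero, Pi.zero_apply]
  calc μ[L ∘ X | m] =ᵐ[μ] μ[μ[L ∘ X | m'] | m] := (condExp_condExp_of_le hm hm').symm
    _ =ᵐ[μ] μ[0 | m] := condExp_congr_ae hLX0
    _ = 0 := condExp_zero

end

namespace LP

section SigmaGen

variable {Ω : Type} {E : Type*} [MeasurableSpace E] {u : ℤ → Ω → E}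

lemma sigmaGen_mono {S S' : Set ℤ} (hSS : S ⊆ S') : sigmaGen u S ≤ sigmaGen u S' :=
  biSup_mono hSS

lemma measurable_sigmaGen {S : Set ℤ} {s : ℤ} (hs : s ∈ S) : Measurable[sigmaGen u S] (u s) :=
  Measurable.of_comap_le (le_iSup₂ (f := fun s (_ : s ∈ S) => MeasurableSpace.comap (u s) _) s hs)

lemma sigmaGen_le [MeasurableSpace Ω] (hu_meas : ∀ t, Measurable (u t)) (S : Set ℤ) :
    sigmaGen u S ≤ ‹MeasurableSpace Ω› :=
  iSup₂_le fun s _ => (hu_meas s).comap_le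

end SigmaGen

variable {Ω : Type} [MeasurableSpace Ω] {μ : Measure Ω} {n p : ℕ} {u : ℤ → Ω → (Fin n → ℝ)}

lemma memLp_two_apply (hu_meas : ∀ t, Measurable (u t))
    (hmom2 : ∀ t : ℤ, Integrable (fun ω => ∑ a, (u t ω a) ^ 2) μ) (t : ℤ) : MemLp (u t) 2 μ :=
  memLp_two_of_integrable_sum_sq (hu_meas t).aestronglyMeasurable (hmom2 t)

lemma memLp_two_dotProduct (hu_meas : ∀ t, Measurable (u t))
    (hmom2 : ∀ t : ℤ, Integrable (fun ω => ∑ a, (u t ω a) ^ 2) μ) (v : Fin n → ℝ) (t : ℤ) :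
    MemLp (fun ω => v ⬝ᵥ u t ω) 2 μ :=
  (memLp_two_apply hu_meas hmom2 t).continuousLinearMap_comp
    (LinearMap.toContinuousLinearMap (dotProductBilin ℝ ℝ v))

lemma memLp_two_xi (hp : 0 < p) (hu_meas : ∀ t, Measurable (u t))
    (hmom2 : ∀ t : ℤ, Integrable (fun ω => ∑ a, (u t ω a) ^ 2) μ)
    (A : Fin p → Matrix (Fin n) (Fin n) ℝ) (h : ℕ) (i : Fin n) (t : ℤ) :
    MemLp (xi hp A h i u t) 2 μ := by
  unfold xi
  exact memLp_finsetSum _ fun ℓ _ => memLp_two_dotProduct hu_meas hmom2 _ _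

omit [MeasurableSpace Ω] in
lemma stronglyMeasurable_xi_future (hp : 0 < p) (A : Fin p → Matrix (Fin n) (Fin n) ℝ)
    (h : ℕ) (i : Fin n) (t : ℤ) :
    StronglyMeasurable[sigmaGen u {s : ℤ | t + 1 ≤ s}] (xi hp A h i u t) := by
  refine Measurable.stronglyMeasurable ?_
  unfold xi
  refine Finset.measurable_sum _ fun ℓ _ => ?_
  have hℓ : t + (ℓ : ℤ) + 1 ∈ {s : ℤ | t + 1 ≤ s} := by simp
  exact (continuous_const.dotProduct continuous_id).measurable.comp (measurable_sigmaGen hℓ)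

lemma condExp_dotProduct_future_eq_zero [IsFiniteMeasure μ] (hu_meas : ∀ t, Measurable (u t))
    (hmom2 : ∀ t : ℤ, Integrable (fun ω => ∑ a, (u t ω a) ^ 2) μ) (hA1 : Assumption1 μ u)
    (w : Fin n → ℝ) (t : ℤ) :
    μ[fun ω => w ⬝ᵥ u t ω | sigmaGen u {s : ℤ | t + 1 ≤ s}] =ᵐ[μ] 0 :=
  condExp_comp_eq_zero_of_le (sigmaGen_mono fun s (hs : t + 1 ≤ s) => (by omega : s ≠ t))
    (sigmaGen_le hu_meas _) ((memLp_two_apply hu_meas hmom2 t).integrable one_le_two) (hA1 t)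
    (LinearMap.toContinuousLinearMap (dotProductBilin ℝ ℝ w))

lemma condExp_xi_mul_dotProduct_future_eq_zero [IsFiniteMeasure μ] (hp : 0 < p)
    (hu_meas : ∀ t, Measurable (u t))
    (hmom2 : ∀ t : ℤ, Integrable (fun ω => ∑ a, (u t ω a) ^ 2) μ) (hA1 : Assumption1 μ u)
    (A : Fin p → Matrix (Fin n) (Fin n) ℝ) (h : ℕ) (i : Fin n) (w : Fin n → ℝ) (t : ℤ) :
    μ[fun ω => xi hp A h i u t ω * (w ⬝ᵥ u t ω) | sigmaGen u {s : ℤ | t + 1 ≤ s}] =ᵐ[μ] 0 :=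
  condExp_mul_eq_zero_of_condExp_eq_zero (stronglyMeasurable_xi_future hp A h i t)
    ((memLp_two_xi hp hu_meas hmom2 A h i t).integrable_mul
      (memLp_two_dotProduct hu_meas hmom2 w t))
    ((memLp_two_dotProduct hu_meas hmom2 w t).integrable one_le_two)
    (condExp_dotProduct_future_eq_zero hu_meas hmom2 hA1 w t)

end LP

open LP in
theorem statement14_general
    {Ω : Type} [MeasurableSpace Ω] (μ : Measure Ω) [IsProbabilityMeasure μ]
    (n p : ℕ) (hp : 0 < p)
    (u : ℤ → Ω → (Fin n → ℝ)) (hu_meas : ∀ t, Measurable (u t))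
    (hmom2 : ∀ t : ℤ, Integrable (fun ω => ∑ a, (u t ω a) ^ 2) μ)
    (hA1 : Assumption1 μ u)
    (A : Fin p → Matrix (Fin n) (Fin n) ℝ) (h : ℕ) (i : Fin n) (w : Fin n → ℝ) :
    (∀ t : ℤ,
      μ[fun ω => xi hp A h i u t ω * (w ⬝ᵥ u t ω) | sigmaGen u {s : ℤ | t + 1 ≤ s}]
        =ᵐ[μ] 0) ∧
    (∀ T t : ℤ,
      μ[fun ω => xi hp A h i u (T - (h : ℤ) + 1 - t) ω * (w ⬝ᵥ u (T - (h : ℤ) + 1 - t) ω)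
          | sigmaGen u {s : ℤ | T - (h : ℤ) + 2 - t ≤ s}]
        =ᵐ[μ] 0) := by
  refine ⟨condExp_xi_mul_dotProduct_future_eq_zero hp hu_meas hmom2 hA1 A h i w, fun T t => ?_⟩
  have hshift : T - (h : ℤ) + 2 - t = (T - (h : ℤ) + 1 - t) + 1 := by ring
  rw [hshift]
  exact condExp_xi_mul_dotProduct_future_eq_zero hp hu_meas hmom2 hA1 A h i w _

open LP in
/-- Martingale difference property of the LP regression scores with respect to
the reversed-time filtration. -/
theorem statement14
    {Ω : Type} [MeasurableSpace Ω] (μ : Measure Ω) [IsProbabilityMeasure μ]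
    (n p : ℕ) (hn : 0 < n) (hp : 0 < p)
    (u : ℤ → Ω → (Fin n → ℝ)) (hu_meas : ∀ t, Measurable (u t))
    (hu_stat : StrictlyStationary μ u)
    (hmom2 : ∀ t : ℤ, Integrable (fun ω => ∑ a, (u t ω a) ^ 2) μ)
    (hA1 : Assumption1 μ u)
    (A : Fin p → Matrix (Fin n) (Fin n) ℝ) (h : ℕ) (i : Fin n) (w : Fin n → ℝ) :
    (∀ t : ℤ,
      μ[fun ω => xi hp A h i u t ω * (w ⬝ᵥ u t ω) | sigmaGen u {s : ℤ | t + 1 ≤ s}]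
        =ᵐ[μ] 0) ∧
    (∀ T t : ℤ,
      μ[fun ω => xi hp A h i u (T - (h : ℤ) + 1 - t) ω * (w ⬝ᵥ u (T - (h : ℤ) + 1 - t) ω)
          | sigmaGen u {s : ℤ | T - (h : ℤ) + 2 - t ≤ s}]
        =ᵐ[μ] 0) :=
  statement14_general μ n p hp u hu_meas hmom2 hA1 A h i w
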